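/- Let Φ⁻¹ be the standard Gaussian inverse CDF and for b ∈ (0, 1/2) set z_b = Φ⁻¹(b). The L²-optimal linear fit α + β·u to Φ⁻¹ on [0, b] has gradient β = (6/b³)·(Φ(√2·z_b)/√π − b·φ(z_b)) and intercept α = 2φ(z_b)/b − 3Φ(√2·z_b)/(b²·√π). -/

import Mathlib

/-!
Minimality of `(α, β)` in each coordinate direction makes the residual `Φinv u - α - β u`
orthogonal to `1` and to `u` in `L²[0, b]`. These normal equations are a `2 × 2` linear system
whose right-hand sides are the moments `∫₀ᵇ Φinv` and `∫₀ᵇ u Φinv`. Substituting `u = Φ z` turns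
them into `∫_{z < z_b} z φ z = -φ(z_b)` and `∫_{z < z_b} Φ z · z φ z`, and the latter has the
antiderivative `Φ(√2 z) / (2√π) - Φ z φ z` because `φ(√2 z) = √(2π) φ(z)²`.
-/

open Real MeasureTheory

noncomputable def phi (z : ℝ) : ℝ := (Real.sqrt (2 * Real.pi))⁻¹ * Real.exp (-z ^ 2 / 2)

noncomputable def Phi (z : ℝ) : ℝ := ∫ s in Set.Iic z, phi s

open Set Filter ProbabilityTheory Topology

lemma phi_eq_gaussianPDFReal : phi = gaussianPDFReal 0 1 := by
  ext z
  simp [phi, gaussianPDFReal]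

lemma phi_pos (z : ℝ) : 0 < phi z :=
  phi_eq_gaussianPDFReal ▸ gaussianPDFReal_pos 0 1 z one_ne_zero

@[fun_prop]
lemma continuous_phi : Continuous phi := by
  unfold phi
  fun_prop

lemma integrable_phi : Integrable phi :=
  phi_eq_gaussianPDFReal ▸ integrable_gaussianPDFReal 0 1

lemma integral_phi : ∫ z, phi z = 1 :=
  phi_eq_gaussianPDFReal ▸ integral_gaussianPDFReal_eq_one 0 one_ne_zero

lemma phi_eq_mul_exp (z : ℝ) : phi z = (√(2 * π))⁻¹ * exp (-(1 / 2) * z ^ 2) := by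
  rw [phi]; ring_nf

lemma integrable_mul_phi : Integrable fun z ↦ z * phi z := by
  simpa [phi_eq_mul_exp, mul_left_comm] using
    (integrable_mul_exp_neg_mul_sq (b := 1 / 2) (by norm_num)).const_mul (√(2 * π))⁻¹

lemma integrable_sq_mul_phi : Integrable fun z ↦ z ^ 2 * phi z := by
  have h := (integrable_rpow_mul_exp_neg_mul_sq (b := 1 / 2) (s := 2) (by norm_num)
    (by norm_num)).const_mul (√(2 * π))⁻¹
  simp_rw [rpow_two] at h
  simpa [phi_eq_mul_exp, mul_left_comm] using h

lemma hasDerivAt_phi (z : ℝ) : HasDerivAt phi (-z * phi z) z := by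
  have h := ((((hasDerivAt_pow 2 z).neg).div_const 2).exp).const_mul (√(2 * π))⁻¹
  exact h.congr_deriv (by simp [phi]; ring)

lemma tendsto_phi_atBot : Tendsto phi atBot (𝓝 0) := by
  have hsq : Tendsto (fun z : ℝ ↦ z ^ 2) atBot atTop := by
    simpa [Function.comp_def] using
      (tendsto_pow_atTop two_ne_zero).comp (tendsto_neg_atBot_atTop (G := ℝ))
  have h := ((tendsto_neg_atTop_atBot (G := ℝ)).comp hsq).atBot_div_const two_pos
  have h' := (tendsto_exp_atBot.comp h).const_mul (√(2 * π))⁻¹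
  rw [mul_zero] at h'
  exact h'

lemma phi_sqrt_two_mul (z : ℝ) : phi (√2 * z) = √(2 * π) * phi z ^ 2 := by
  simp only [phi, mul_pow, sq_sqrt zero_le_two, inv_pow, ← exp_nat_mul]
  field_simp
  push_cast
  ring_nf

lemma Phi_sub_Phi (a b : ℝ) : Phi b - Phi a = ∫ t in a..b, phi t :=
  intervalIntegral.integral_Iic_sub_Iic integrable_phi.integrableOn integrable_phi.integrableOn

lemma hasDerivAt_Phi (z : ℝ) : HasDerivAt Phi (phi z) z := by
  have h := (intervalIntegral.integral_hasDerivAt_right (a := 0) (b := z)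
    integrable_phi.intervalIntegrable (continuous_phi.stronglyMeasurableAtFilter _ _)
    continuous_phi.continuousAt).add_const (Phi 0)
  exact h.congr_of_eventuallyEq (Eventually.of_forall fun x ↦ by simp [← Phi_sub_Phi 0 x])

@[fun_prop]
lemma continuous_Phi : Continuous Phi :=
  continuous_iff_continuousAt.2 fun z ↦ (hasDerivAt_Phi z).continuousAt

lemma strictMono_Phi : StrictMono Phi :=
  strictMono_of_deriv_pos fun z ↦ (hasDerivAt_Phi z).deriv ▸ phi_pos z

lemma Phi_pos (z : ℝ) : 0 < Phi z := by
  rw [Phi, setIntegral_pos_iff_support_of_nonneg_ae (ae_of_all _ fun x ↦ (phi_pos x).le)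
    integrable_phi.integrableOn, Function.support_eq_univ fun x ↦ (phi_pos x).ne', univ_inter]
  simp

lemma Phi_lt_one (z : ℝ) : Phi z < 1 :=
  calc Phi z < Phi (z + 1) := strictMono_Phi (lt_add_one z)
    _ ≤ ∫ x, phi x := setIntegral_le_integral integrable_phi (ae_of_all _ fun x ↦ (phi_pos x).le)
    _ = 1 := integral_phi

lemma tendsto_Phi_atBot : Tendsto Phi atBot (𝓝 0) := by
  have h := (intervalIntegral_tendsto_integral_Iic 0 integrable_phi.integrableOn
    tendsto_id).const_sub (Phi 0)
  simp_rw [← Phi_sub_Phi, sub_sub_cancel, id] at h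
  change Tendsto Phi atBot (𝓝 (Phi 0 - Phi 0)) at h
  rwa [sub_self] at h

lemma image_Phi_Iio (c : ℝ) : Phi '' Iio c = Ioo 0 (Phi c) := by
  refine Subset.antisymm (image_subset_iff.2 fun z hz ↦ ⟨Phi_pos z, strictMono_Phi hz⟩) ?_
  rintro u ⟨hu₀, huc⟩
  obtain ⟨a, hau, hac⟩ := ((tendsto_Phi_atBot.eventually_lt_const hu₀).and
    (eventually_lt_atBot c)).exists
  obtain ⟨z, hz, rfl⟩ := intermediate_value_Ico hac.le continuous_Phi.continuousOn ⟨hau.le, huc⟩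
  exact ⟨z, hz.2, rfl⟩

lemma integral_Iic_mul_phi (c : ℝ) : ∫ z in Iic c, z * phi z = -phi c := by
  have h := integral_Iic_of_hasDerivAt_of_tendsto (f := fun z ↦ -phi z) (a := c)
    continuous_phi.neg.continuousWithinAt
    (fun z _ ↦ (hasDerivAt_phi z).neg) (by simpa using integrable_mul_phi.integrableOn)
    (by simpa using tendsto_phi_atBot.neg)
  simpa using h

lemma hasDerivAt_antideriv_Phi_mul_mul_phi (z : ℝ) :
    HasDerivAt (fun z ↦ Phi (√2 * z) / (2 * √π) - Phi z * phi z) (Phi z * (z * phi z)) z := by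
  have hscaled := ((hasDerivAt_Phi (√2 * z)).comp z ((hasDerivAt_id z).const_mul √2)).div_const
    (2 * √π)
  refine (hscaled.sub ((hasDerivAt_Phi z).mul (hasDerivAt_phi z))).congr_deriv ?_
  have hπ : √π ≠ 0 := by positivity
  rw [phi_sqrt_two_mul, sqrt_mul zero_le_two]
  field_simp
  rw [sq_sqrt zero_le_two]
  ring

lemma integral_Iic_Phi_mul_mul_phi (c : ℝ) :
    ∫ z in Iic c, Phi z * (z * phi z) = Phi (√2 * c) / (2 * √π) - Phi c * phi c := by
  have hint : IntegrableOn (fun z ↦ Phi z * (z * phi z)) (Iic c) :=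
    integrable_mul_phi.integrableOn.bdd_mul continuous_Phi.aestronglyMeasurable
      ((ae_restrict_mem measurableSet_Iic).mono fun z hz ↦ by
        rw [norm_of_nonneg (Phi_pos z).le]; exact strictMono_Phi.monotone hz)
  have hlim : Tendsto (fun z ↦ Phi (√2 * z) / (2 * √π) - Phi z * phi z) atBot (𝓝 0) := by
    have hscaled := tendsto_Phi_atBot.comp (tendsto_id.const_mul_atBot (by positivity : 0 < √2))
    have h := (hscaled.div_const (2 * √π)).sub (tendsto_Phi_atBot.mul tendsto_phi_atBot)
    simpa using h
  have hcont : Continuous fun z ↦ Phi (√2 * z) / (2 * √π) - Phi z * phi z := by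
    fun_prop
  exact integral_Iic_of_hasDerivAt_of_tendsto hcont.continuousWithinAt
    (fun z _ ↦ hasDerivAt_antideriv_Phi_mul_mul_phi z) hint hlim |>.trans (sub_zero _)

lemma integral_Icc_Phi (c : ℝ) (g : ℝ → ℝ) :
    ∫ u in Icc 0 (Phi c), g u = ∫ z in Iio c, phi z * g (Phi z) := by
  rw [integral_Icc_eq_integral_Ioo, ← image_Phi_Iio,
    integral_image_eq_integral_abs_deriv_smul measurableSet_Iio
      (fun z _ ↦ (hasDerivAt_Phi z).hasDerivWithinAt) strictMono_Phi.injective.injOn]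
  simp_rw [abs_of_pos (phi_pos _), smul_eq_mul]

lemma integrableOn_Icc_Phi_iff (c : ℝ) (g : ℝ → ℝ) :
    IntegrableOn g (Icc 0 (Phi c)) ↔ IntegrableOn (fun z ↦ phi z * g (Phi z)) (Iio c) := by
  rw [integrableOn_Icc_iff_integrableOn_Ioo, ← image_Phi_Iio,
    integrableOn_image_iff_integrableOn_abs_deriv_smul measurableSet_Iio
      (fun z _ ↦ (hasDerivAt_Phi z).hasDerivWithinAt) strictMono_Phi.injective.injOn]
  simp_rw [abs_of_pos (phi_pos _), smul_eq_mul]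

section Quantile

variable {Φinv : ℝ → ℝ}

lemma quantile_Phi (hinv : ∀ y ∈ Ioo (0 : ℝ) 1, Phi (Φinv y) = y) (z : ℝ) : Φinv (Phi z) = z :=
  strictMono_Phi.injective (hinv _ ⟨Phi_pos z, Phi_lt_one z⟩)

lemma integral_Icc_quantile (hinv : ∀ y ∈ Ioo (0 : ℝ) 1, Phi (Φinv y) = y) (c : ℝ) :
    ∫ u in Icc 0 (Phi c), Φinv u = -phi c := by
  simp_rw [integral_Icc_Phi, quantile_Phi hinv, ← integral_Iic_eq_integral_Iio,
    ← integral_Iic_mul_phi c, mul_comm (phi _)]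

lemma integral_Icc_mul_quantile (hinv : ∀ y ∈ Ioo (0 : ℝ) 1, Phi (Φinv y) = y) (c : ℝ) :
    ∫ u in Icc 0 (Phi c), u * Φinv u = Phi (√2 * c) / (2 * √π) - Phi c * phi c := by
  simp_rw [integral_Icc_Phi, quantile_Phi hinv, ← integral_Iic_eq_integral_Iio,
    ← integral_Iic_Phi_mul_mul_phi c, mul_left_comm (phi _), mul_comm (phi _)]

lemma memLp_quantile (hinv : ∀ y ∈ Ioo (0 : ℝ) 1, Phi (Φinv y) = y) (c : ℝ) :
    MemLp Φinv 2 (volume.restrict (Icc 0 (Phi c))) := by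
  have hint : IntegrableOn Φinv (Icc 0 (Phi c)) := by
    simpa [integrableOn_Icc_Phi_iff, quantile_Phi hinv, mul_comm (phi _)] using
      integrable_mul_phi.integrableOn
  refine (memLp_two_iff_integrable_sq hint.aestronglyMeasurable).2 ?_
  change IntegrableOn (fun u ↦ Φinv u ^ 2) (Icc 0 (Phi c))
  simpa [integrableOn_Icc_Phi_iff, quantile_Phi hinv, mul_comm (phi _)] using
    integrable_sq_mul_phi.integrableOn

end Quantile

lemma integral_mul_eq_zero_of_forall_integral_sq_le {X : Type*} [MeasurableSpace X]
    {μ : Measure X} {g h : X → ℝ} (hg : MemLp g 2 μ) (hh : MemLp h 2 μ)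
    (hmin : ∀ t : ℝ, ∫ x, g x ^ 2 ∂μ ≤ ∫ x, (g x - t * h x) ^ 2 ∂μ) :
    ∫ x, g x * h x ∂μ = 0 := by
  have hg₂ := hg.integrable_sq
  have hh₂ := hh.integrable_sq
  have hgh : Integrable (fun x ↦ g x * h x) μ := hg.integrable_mul hh
  have hexpand (t : ℝ) : ∫ x, (g x - t * h x) ^ 2 ∂μ =
      ∫ x, g x ^ 2 ∂μ + (-2 * t) * ∫ x, g x * h x ∂μ + t ^ 2 * ∫ x, h x ^ 2 ∂μ := by
    calc ∫ x, (g x - t * h x) ^ 2 ∂μ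
        = ∫ x, g x ^ 2 + (-2 * t) * (g x * h x) + t ^ 2 * h x ^ 2 ∂μ := by congr with x; ring
      _ = _ := by
        rw [integral_add (by fun_prop) (by fun_prop), integral_add (by fun_prop) (by fun_prop),
          integral_const_mul, integral_const_mul]
  have hdiscr := discrim_le_zero (a := ∫ x, h x ^ 2 ∂μ) (b := -2 * ∫ x, g x * h x ∂μ) (c := 0)
    fun t ↦ by linarith [hmin t, hexpand t]
  rw [discrim] at hdiscr
  nlinarith [sq_nonneg (∫ x, g x * h x ∂μ)]

lemma normal_equations_of_forall_integral_sq_le {μ : Measure ℝ} [IsFiniteMeasure μ] {f : ℝ → ℝ}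
    (hf : MemLp f 2 μ) (hid : MemLp id 2 μ) {α β : ℝ}
    (hmin : ∀ α' β' : ℝ, ∫ x, (f x - α - β * x) ^ 2 ∂μ ≤ ∫ x, (f x - α' - β' * x) ^ 2 ∂μ) :
    ∫ x, f x ∂μ = α * μ.real univ + β * ∫ x, x ∂μ ∧
      ∫ x, x * f x ∂μ = α * ∫ x, x ∂μ + β * ∫ x, x ^ 2 ∂μ := by
  have he : MemLp (fun x ↦ f x - α - β * x) 2 μ := (hf.sub (memLp_const α)).sub (hid.const_mul β)
  have h₀ := integral_mul_eq_zero_of_forall_integral_sq_le he (memLp_const 1) fun t ↦ by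
    convert hmin (α + t) β using 3; ring
  have h₁ := integral_mul_eq_zero_of_forall_integral_sq_le he hid fun t ↦ by
    convert hmin α (β + t) using 3; simp only [id]; ring
  have hf₁ : Integrable f μ := hf.integrable one_le_two
  have hid₁ : Integrable (fun x : ℝ ↦ x) μ := hid.integrable one_le_two
  have hxf : Integrable (fun x ↦ x * f x) μ := hid.integrable_mul hf
  have hsq : Integrable (fun x : ℝ ↦ x ^ 2) μ := hid.integrable_sq
  constructor
  · simp only [mul_one] at h₀
    rw [integral_sub (by fun_prop) (hid₁.const_mul β), integral_sub hf₁ (by fun_prop),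
      integral_const, integral_const_mul, smul_eq_mul] at h₀
    linarith
  · have h₁' : ∫ x, x * f x - α * x - β * x ^ 2 ∂μ = 0 := by
      rw [← h₁]; congr with x; simp only [id]; ring
    rw [integral_sub (f := fun x ↦ x * f x - α * x) (hxf.sub (hid₁.const_mul α))
      (hsq.const_mul β), integral_sub hxf (hid₁.const_mul α), integral_const_mul,
      integral_const_mul] at h₁'
    linarith

theorem singular_interval_L2_fit (Φinv : ℝ → ℝ)
    (hinv : ∀ y ∈ Set.Ioo (0 : ℝ) 1, Phi (Φinv y) = y)
    (b : ℝ) (hb0 : 0 < b) (hb : b < 1 / 2)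
    (α β : ℝ)
    (hmin : ∀ α' β' : ℝ,
      (∫ u in Set.Icc (0 : ℝ) b, (Φinv u - α - β * u) ^ 2) ≤
        ∫ u in Set.Icc (0 : ℝ) b, (Φinv u - α' - β' * u) ^ 2) :
    β = (6 / b ^ 3) * (Phi (Real.sqrt 2 * Φinv b) / Real.sqrt Real.pi - b * phi (Φinv b)) ∧
    α = 2 * phi (Φinv b) / b - 3 * Phi (Real.sqrt 2 * Φinv b) / (b ^ 2 * Real.sqrt Real.pi) := by
  have hc : Phi (Φinv b) = b := hinv b ⟨hb0, by linarith⟩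
  have hf := memLp_quantile hinv (Φinv b)
  have hI₀ := integral_Icc_quantile hinv (Φinv b)
  have hI₁ := integral_Icc_mul_quantile hinv (Φinv b)
  rw [hc] at hf hI₀ hI₁
  obtain ⟨h₀, h₁⟩ := normal_equations_of_forall_integral_sq_le hf
    (monotoneOn_id.memLp_isCompact isCompact_Icc) hmin
  rw [hI₀, measureReal_restrict_apply_univ, Real.volume_real_Icc_of_le hb0.le,
    integral_Icc_eq_integral_Ioc, ← intervalIntegral.integral_of_le hb0.le, integral_id] at h₀
  rw [hI₁, integral_Icc_eq_integral_Ioc, ← intervalIntegral.integral_of_le hb0.le, integral_id,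
    integral_Icc_eq_integral_Ioc, ← intervalIntegral.integral_of_le hb0.le, integral_pow] at h₁
  have hπ : √π ≠ 0 := by positivity
  norm_num at h₀ h₁
  field_simp at h₁
  constructor
  · field_simp
    linear_combination 6 * √π * b * h₀ - 2 * h₁
  · field_simp
    linear_combination h₁ - 4 * √π * b * h₀
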